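/- arXiv:1806.01752 — 3 statements merged into one kernel-verified Lean document; each statement's English description precedes it below -/
import Mathlib

section
/- Let A be a finitely generated abelian group and Q ⊂ (A ⊗_ℤ ℝ)^* a closed salient cone. Then there exist elements y₀,…,y_k ∈ A which generate A as a group and satisfy 0 ⪯_Q y_i for every i (i.e. f(y_i ⊗ 1) ≥ 0 for all f ∈ Q). -/
/-- An additive character `A → ℝ`.  Under the hom-tensor adjunction
`Hom_ℝ(A ⊗_ℤ ℝ, ℝ) ≅ Hom_ℤ(A, ℝ)`, such functions correspond exactly to the elements of the
real dual `(A ⊗_ℤ ℝ)^*` of the (multiplicatively written) abelian group `A`. -/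
def IsAddChar {A : Type*} [CommGroup A] (f : A → ℝ) : Prop :=
  ∀ x y : A, f (x * y) = f x + f y

/-- `Q` is a cone in `(A ⊗_ℤ ℝ)^*`: all of its elements lie in the dual space
(i.e. are additive characters) and `Q` is closed under positive linear combinations. -/
def IsFunctionalCone {A : Type*} [CommGroup A] (Q : Set (A → ℝ)) : Prop :=
  (∀ f ∈ Q, IsAddChar f) ∧
    ∀ f ∈ Q, ∀ g ∈ Q, ∀ α β : ℝ, 0 < α → 0 < β → α • f + β • g ∈ Q

/-- The relation `x ⪯_Q y`, i.e. `f((y·x⁻¹) ⊗ 1) ≥ 0` for all `f ∈ Q`. -/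
def ConePreorder {A : Type*} [CommGroup A] (Q : Set (A → ℝ)) (x y : A) : Prop :=
  ∀ f ∈ Q, 0 ≤ f (y * x⁻¹)

/-- A cone is salient if for every nonzero `f ∈ Q` we have `-f ∉ Q`. -/
def IsSalientCone {A : Type*} [CommGroup A] (Q : Set (A → ℝ)) : Prop :=
  ∀ f ∈ Q, f ≠ 0 → -f ∉ Q

/-- `y` is a `Q`-cofinal element: `0 ⪯_Q y` and the powers of `y` are cofinal in `(A, ⪯_Q)`. -/
def IsCofinalElt {A : Type*} [CommGroup A] (Q : Set (A → ℝ)) (y : A) : Prop :=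
  ConePreorder Q 1 y ∧ ∀ a : A, ∃ n : ℕ, ConePreorder Q a (y ^ n)

/-!
Fix generators `g₁, …, gₙ` of `A`. Evaluation at the `gᵢ` identifies `Q` with a closed salient
cone `C ⊆ ℝⁿ`, so the dual cone `C*` has nonempty interior: some `v` satisfies `‖x‖ ≤ ⟪x, v⟫` on
`C`, and rounding a large multiple of `v` keeps this for an integer vector `m`. Then
`u = ∏ gᵢ ^ mᵢ` satisfies `|f gᵢ| ≤ f u` for all `f ∈ Q`, so `u` and the `gᵢ u` are
`Q`-nonnegative, and they still generate `A`.
-/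

open scoped InnerProductSpace

section ConeBound
variable {E : Type*} [NormedAddCommGroup E] [InnerProductSpace ℝ E]

namespace ProperCone

/-- Otherwise `K*` lies in a hyperplane `wᗮ`, and then `±w ∈ K** = K`. -/
lemma interior_innerDual_nonempty [FiniteDimensional ℝ E] (K : ProperCone ℝ E)
    (hK : (K : ConvexCone ℝ E).Salient) : (interior (innerDual (K : Set E) : Set E)).Nonempty := by
  set D : Set E := (innerDual (K : Set E) : Set E)
  have hD0 : (0 : E) ∈ D := zero_mem _
  have hconv : Convex ℝ D := (innerDual (K : Set E)).convex
  rw [hconv.interior_nonempty_iff_affineSpan_eq_top,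
    ← AffineSubspace.coe_eq_univ_iff, ← Set.insert_eq_of_mem hD0, affineSpan_insert_zero,
    Submodule.coe_eq_univ, ← Submodule.orthogonal_eq_bot_iff]
  by_contra h
  obtain ⟨w, hw, hw0⟩ := Submodule.exists_mem_ne_zero_of_ne_bot h
  have hperp : ∀ y ∈ D, ⟪y, w⟫_ℝ = 0 := fun y hy =>
    Submodule.inner_right_of_mem_orthogonal (Submodule.subset_span hy) hw
  have hmem : ∀ z, (∀ y ∈ D, ⟪y, z⟫_ℝ = 0) → z ∈ K := fun z hz => by
    rw [← innerDual_innerDual K]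
    exact fun y hy => (hz y hy).ge
  exact hK w (hmem w hperp) hw0
    (hmem (-w) fun y hy => by rw [inner_neg_right, hperp y hy, neg_zero])

end ProperCone

lemma exists_pos_mul_norm_le_inner_of_mem_interior_innerDual [CompleteSpace E] {s : Set E}
    {u : E} (hu : u ∈ interior (ProperCone.innerDual s : Set E)) :
    ∃ ε > 0, ∀ x ∈ s, ε * ‖x‖ ≤ ⟪x, u⟫_ℝ := by
  obtain ⟨ε, hε, hball⟩ :=
    Metric.nhds_basis_closedBall.mem_iff.mp (mem_interior_iff_mem_nhds.mp hu)
  refine ⟨ε, hε, fun x hx => ?_⟩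
  rcases eq_or_ne x 0 with rfl | hx0
  · simp
  have hnorm : 0 < ‖x‖ := norm_pos_iff.mpr hx0
  have hmem : u - (ε / ‖x‖) • x ∈ Metric.closedBall u ε := by
    rw [mem_closedBall_iff_norm, sub_sub_cancel_left, norm_neg, norm_smul, Real.norm_eq_abs,
      abs_of_pos (div_pos hε hnorm), div_mul_cancel₀ _ hnorm.ne']
  have := ProperCone.mem_innerDual.mp (hball hmem) hx
  rw [inner_sub_right, inner_smul_right, real_inner_self_eq_norm_sq] at this
  have : ε / ‖x‖ * ‖x‖ ^ 2 = ε * ‖x‖ := by field_simp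
  linarith

lemma ConvexCone.exists_norm_le_inner [FiniteDimensional ℝ E] (C : ConvexCone ℝ E)
    (hC : IsClosed (C : Set E)) (hs : C.Salient) : ∃ v : E, ∀ x ∈ C, ‖x‖ ≤ ⟪x, v⟫_ℝ := by
  rcases (C : Set E).eq_empty_or_nonempty with hempty | hne
  · exact ⟨0, fun x hx => absurd hx (Set.eq_empty_iff_forall_notMem.mp hempty x)⟩
  lift C to ProperCone ℝ E using ⟨hne, hC⟩
  obtain ⟨u, hu⟩ := C.interior_innerDual_nonempty hs
  obtain ⟨ε, hε, hbound⟩ := exists_pos_mul_norm_le_inner_of_mem_interior_innerDual hu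
  refine ⟨ε⁻¹ • u, fun x hx => ?_⟩
  rw [inner_smul_right, ← div_eq_inv_mul, le_div_iff₀ hε, mul_comm]
  exact hbound x hx

end ConeBound

namespace EuclideanSpace
variable {ι : Type*} [Fintype ι]

lemma norm_round_sub_le (w : EuclideanSpace ℝ ι) :
    ‖WithLp.toLp 2 (fun i => (round (w i) : ℝ)) - w‖ ≤ Fintype.card ι := by
  rw [← sq_le_sq₀ (norm_nonneg _) (Nat.cast_nonneg _), EuclideanSpace.norm_sq_eq]
  calc ∑ i, ‖(WithLp.toLp 2 (fun i => (round (w i) : ℝ)) - w) i‖ ^ 2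
      ≤ ∑ _i : ι, (1 : ℝ) := Finset.sum_le_sum fun i _ => by
        rw [PiLp.sub_apply, Real.norm_eq_abs, abs_sub_comm]
        exact pow_le_one₀ (abs_nonneg _) ((abs_sub_round (w i)).trans (by norm_num))
    _ ≤ (Fintype.card ι : ℝ) ^ 2 := by
        simp only [Finset.sum_const, Finset.card_univ, nsmul_eq_mul, mul_one]
        exact_mod_cast Nat.le_self_pow two_ne_zero _

/-- Rounding `(card ι + 1) • v` costs at most `card ι * ‖x‖` in `⟪x, ·⟫`, which the extra
factor absorbs. -/
lemma exists_int_norm_le_sum_mul {s : Set (EuclideanSpace ℝ ι)} (v : EuclideanSpace ℝ ι)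
    (hv : ∀ x ∈ s, ‖x‖ ≤ ⟪x, v⟫_ℝ) : ∃ m : ι → ℤ, ∀ x ∈ s, ‖x‖ ≤ ∑ i, m i * x i := by
  set w := ((Fintype.card ι + 1 : ℕ) : ℝ) • v
  set M := WithLp.toLp 2 (fun i => (round (w i) : ℝ))
  refine ⟨fun i => round (w i), fun x hx => ?_⟩
  have hM : ∑ i, (round (w i) : ℝ) * x i = ⟪x, w⟫_ℝ + ⟪x, M - w⟫_ℝ := by
    rw [← inner_add_right, add_sub_cancel, EuclideanSpace.inner_eq_star_dotProduct]
    simp [M, dotProduct]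
  have hxw : ⟪x, w⟫_ℝ = (Fintype.card ι + 1) * ⟪x, v⟫_ℝ := by
    simp [w, inner_smul_right]
  have herr : -(‖x‖ * Fintype.card ι) ≤ ⟪x, M - w⟫_ℝ :=
    calc -(‖x‖ * Fintype.card ι) ≤ -(‖x‖ * ‖M - w‖) := by
          gcongr; exact norm_round_sub_le w
      _ ≤ ⟪x, M - w⟫_ℝ := neg_le_of_abs_le (abs_real_inner_le_norm _ _)
  have hscaled := mul_le_mul_of_nonneg_left (hv x hx) (by positivity : (0 : ℝ) ≤ Fintype.card ι + 1)
  rw [hM, hxw]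
  linarith

end EuclideanSpace

section
variable {A : Type*} [CommGroup A] {f : A → ℝ}

lemma IsAddChar.map_prod_zpow (hf : IsAddChar f) {ι : Type*} [Fintype ι] (g : ι → A)
    (m : ι → ℤ) : f (∏ i, g i ^ m i) = ∑ i, m i * f (g i) := by
  let F : Additive A →+ ℝ := AddMonoidHom.mk' (fun a => f a.toMul) fun a b => hf _ _
  have hzpow (x : A) (k : ℤ) : f (x ^ k) = k * f x := by
    simpa [F] using map_zsmul F k (Additive.ofMul x)
  simpa [F, ← ofMul_zpow, ← ofMul_prod, hzpow] using
    map_sum F (fun i => m i • Additive.ofMul (g i)) .univ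

def IsFunctionalCone.toConvexCone {Q : Set (A → ℝ)} (hQ : IsFunctionalCone Q) :
    ConvexCone ℝ (A → ℝ) where
  carrier := Q
  smul_mem' c hc f hf := by
    simpa [← add_smul] using hQ.2 f hf f hf (c / 2) (c / 2) (by positivity) (by positivity)
  add_mem' f hf g hg := by simpa using hQ.2 f hf g hg 1 1 one_pos one_pos

end

section Coordinates
variable {A ι : Type*}

def charValues (g : ι → A) : (A → ℝ) →ₗ[ℝ] EuclideanSpace ℝ ι :=
  (WithLp.linearEquiv 2 ℝ (ι → ℝ)).symm.toLinearMap ∘ₗ LinearMap.funLeft ℝ ℝ g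

@[simp] lemma charValues_apply (g : ι → A) (f : A → ℝ) (i : ι) : charValues g f i = f (g i) := rfl

variable [Fintype ι]

noncomputable def charOfValues (c : A → ι → ℤ) : EuclideanSpace ℝ ι →ₗ[ℝ] (A → ℝ) :=
  LinearMap.pi fun a => ∑ i, (c a i : ℝ) • (EuclideanSpace.proj i).toLinearMap

@[simp] lemma charOfValues_apply (c : A → ι → ℤ) (x : EuclideanSpace ℝ ι) (a : A) :
    charOfValues c x a = ∑ i, c a i * x i := by
  simp [charOfValues]

variable [CommGroup A]

/-- With `a = ∏ gᵢ ^ c a i` for all `a`, this is the image of `Q` under `charValues g`, written as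
a preimage cut down by an equalizer so that it is visibly closed. -/
noncomputable def valueCone {Q : Set (A → ℝ)} (hQ : IsFunctionalCone Q) (g : ι → A)
    (c : A → ι → ℤ) : ConvexCone ℝ (EuclideanSpace ℝ ι) :=
  hQ.toConvexCone.comap (charOfValues c) ⊓
    (LinearMap.eqLocus (charValues g ∘ₗ charOfValues c) LinearMap.id).toConvexCone

variable {g : ι → A} {c : A → ι → ℤ} {Q : Set (A → ℝ)} {hQ : IsFunctionalCone Q}

lemma charOfValues_charValues (hc : ∀ a, a = ∏ i, g i ^ c a i) {f : A → ℝ} (hf : IsAddChar f) :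
    charOfValues c (charValues g f) = f := by
  ext a
  conv_rhs => rw [hc a, hf.map_prod_zpow]
  simp

lemma mem_valueCone {x : EuclideanSpace ℝ ι} :
    x ∈ valueCone hQ g c ↔ charOfValues c x ∈ Q ∧ charValues g (charOfValues c x) = x :=
  Iff.rfl

lemma isClosed_valueCone (hclosed : IsClosed Q) :
    IsClosed (valueCone hQ g c : Set (EuclideanSpace ℝ ι)) :=
  (hclosed.preimage (charOfValues c).continuous_of_finiteDimensional).inter
    (isClosed_eq ((charValues g ∘ₗ charOfValues c).continuous_of_finiteDimensional) continuous_id)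

lemma salient_valueCone (hsalient : IsSalientCone Q) : (valueCone hQ g c).Salient := by
  intro x hx hx0 hnx
  rw [mem_valueCone] at hx hnx
  rw [map_neg] at hnx
  have hne : charOfValues c x ≠ 0 := fun h => hx0 (by rw [← hx.2, h, map_zero])
  exact hsalient _ hx.1 hne hnx.1

lemma charValues_mem_valueCone (hc : ∀ a, a = ∏ i, g i ^ c a i) {f : A → ℝ} (hf : f ∈ Q) :
    charValues g f ∈ valueCone hQ g c := by
  rw [mem_valueCone, charOfValues_charValues hc (hQ.1 f hf)]
  exact ⟨hf, rfl⟩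

end Coordinates

lemma exists_abs_apply_le_of_closure_range_eq_top {A ι : Type*} [CommGroup A] [Fintype ι]
    {g : ι → A} (hg : Subgroup.closure (Set.range g) = ⊤) {Q : Set (A → ℝ)}
    (hQ : IsFunctionalCone Q) (hclosed : IsClosed Q) (hsalient : IsSalientCone Q) :
    ∃ u : A, ∀ f ∈ Q, 0 ≤ f u ∧ ∀ i, |f (g i)| ≤ f u := by
  choose c hc using fun a =>
    Subgroup.mem_closure_range_iff_of_fintype.mp (hg ▸ Subgroup.mem_top a)
  obtain ⟨v, hv⟩ := (valueCone hQ g c).exists_norm_le_inner (isClosed_valueCone hclosed)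
    (salient_valueCone hsalient)
  obtain ⟨m, hm⟩ := EuclideanSpace.exists_int_norm_le_sum_mul v hv
  refine ⟨∏ i, g i ^ m i, fun f hf => ?_⟩
  have hnorm : ‖charValues g f‖ ≤ f (∏ i, g i ^ m i) := by
    rw [(hQ.1 f hf).map_prod_zpow]
    exact hm _ (charValues_mem_valueCone hc hf)
  exact ⟨(norm_nonneg _).trans hnorm,
    fun i => (PiLp.norm_apply_le (charValues g f) i).trans hnorm⟩

lemma Subgroup.closure_insert_image_mul_right {G : Type*} [Group G] (u : G) (s : Set G) :
    closure (insert u ((· * u) '' s)) = closure (insert u s) := by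
  have hu {t : Set G} : u ∈ closure (insert u t) := subset_closure (Set.mem_insert u t)
  apply le_antisymm <;> rw [closure_le] <;> rintro x (rfl | hx)
  · exact hu
  · obtain ⟨y, hy, rfl⟩ := hx
    exact mul_mem (subset_closure (Set.mem_insert_of_mem u hy)) hu
  · exact hu
  · have hxu : x * u ∈ closure (insert u ((· * u) '' s)) :=
      subset_closure (Set.mem_insert_of_mem u (Set.mem_image_of_mem (· * u) hx))
    simpa using mul_mem hxu (inv_mem hu)

/-- for a closed salient cone `Q ⊆ (A ⊗_ℤ ℝ)^*` (`A` finitely generated),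
there are elements `y₀,…,y_k` generating `A` as a group with `0 ⪯_Q yᵢ` for all `i`.
The topology on the dual space is that of pointwise convergence (which agrees with the
standard topology on the finite dimensional space `(A ⊗_ℤ ℝ)^*`). -/
theorem exists_nonneg_generators {A : Type*} [CommGroup A] [Group.FG A]
    (Q : Set (A → ℝ)) (hQ : IsFunctionalCone Q) (hclosed : IsClosed Q)
    (hsalient : IsSalientCone Q) :
    ∃ s : Finset A, Subgroup.closure (s : Set A) = ⊤ ∧ ∀ y ∈ s, ConePreorder Q 1 y := by
  classical
  obtain ⟨S, hS⟩ := Group.fg_def.mp ‹Group.FG A›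
  have hg : Subgroup.closure (Set.range ((↑) : S → A)) = ⊤ := by rwa [Subtype.range_coe]
  obtain ⟨u, hu⟩ := exists_abs_apply_le_of_closure_range_eq_top hg hQ hclosed hsalient
  refine ⟨insert u (S.image (· * u)), ?_, ?_⟩
  · rw [Finset.coe_insert, Finset.coe_image, Subgroup.closure_insert_image_mul_right, eq_top_iff,
      ← hS]
    exact Subgroup.closure_mono (Set.subset_insert _ _)
  · intro y hy f hf
    obtain ⟨hu0, hgu⟩ := hu f hf
    rw [inv_one, mul_one]
    rcases Finset.mem_insert.mp hy with rfl | hy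
    · exact hu0
    · obtain ⟨a, ha, rfl⟩ := Finset.mem_image.mp hy
      rw [hQ.1 f hf]
      linarith [neg_abs_le (f a), hgu ⟨a, ha⟩]
end

section
/- Let A be a finitely generated abelian group and let Q₀, Q₁ ⊂ (A ⊗_ℤ ℝ)^* be closed salient cones with Q₁ ⊂ Q₀. Then there exists y ∈ A which is simultaneously Q₀-cofinal and Q₁-cofinal; i.e. 0 ⪯_{Q_j} y and for every x ∈ A with 0 ⪯_{Q_j} x, there is n ∈ ℕ with x ⪯_{Q_j} yⁿ, for j = 0,1. -/
open Set Filter Topology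

namespace IsAddChar

variable {A : Type*} [CommGroup A] {f : A → ℝ}

def toAddMonoidHom (hf : IsAddChar f) : Additive A →+ ℝ :=
  AddMonoidHom.mk' (fun a => f a.toMul) fun x y => hf x.toMul y.toMul

lemma map_one (hf : IsAddChar f) : f 1 = 0 :=
  hf.toAddMonoidHom.map_zero

lemma map_inv (hf : IsAddChar f) (x : A) : f x⁻¹ = -f x :=
  hf.toAddMonoidHom.map_neg (Additive.ofMul x)

lemma map_pow (hf : IsAddChar f) (x : A) (n : ℕ) : f (x ^ n) = n * f x :=
  (hf.toAddMonoidHom.map_nsmul n (Additive.ofMul x)).trans (nsmul_eq_mul n (f x))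

lemma map_zpow (hf : IsAddChar f) (x : A) (n : ℤ) : f (x ^ n) = n * f x :=
  (hf.toAddMonoidHom.map_zsmul n (Additive.ofMul x)).trans (zsmul_eq_mul (f x) n)

lemma map_prod (hf : IsAddChar f) {ι : Type*} (s : Finset ι) (x : ι → A) :
    f (∏ i ∈ s, x i) = ∑ i ∈ s, f (x i) :=
  map_sum hf.toAddMonoidHom (fun i => Additive.ofMul (x i)) s

end IsAddChar

section

variable {A : Type*} [CommGroup A]

variable (A) in
def addCharSubmodule : Submodule ℝ (A → ℝ) where
  carrier := {f | IsAddChar f}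
  add_mem' {f g} hf hg x y := by simp only [Pi.add_apply, hf x y, hg x y]; ring
  zero_mem' _ _ := by simp
  smul_mem' c f hf x y := by simp only [Pi.smul_apply, smul_eq_mul, hf x y]; ring

lemma ConePreorder.anti {Q₀ Q₁ : Set (A → ℝ)} (h : Q₁ ⊆ Q₀) {x y : A}
    (hxy : ConePreorder Q₀ x y) : ConePreorder Q₁ x y :=
  fun f hf => hxy f (h hf)

lemma IsCofinalElt.anti {Q₀ Q₁ : Set (A → ℝ)} (h : Q₁ ⊆ Q₀) {y : A}
    (hy : IsCofinalElt Q₀ y) : IsCofinalElt Q₁ y :=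
  ⟨hy.1.anti h, fun a => (hy.2 a).imp fun _ hn => hn.anti h⟩

namespace IsFunctionalCone

variable {Q : Set (A → ℝ)}

lemma smul_mem (hQ : IsFunctionalCone Q) {f : A → ℝ} (hf : f ∈ Q) {c : ℝ} (hc : 0 < c) :
    c • f ∈ Q := by
  simpa [← add_smul] using hQ.2 f hf f hf (c / 2) (c / 2) (by linarith) (by linarith)

lemma zero_mem (hQ : IsFunctionalCone Q) (hcl : IsClosed Q) (hne : Q.Nonempty) :
    (0 : A → ℝ) ∈ Q := by
  obtain ⟨f, hf⟩ := hne
  have hlim : Tendsto (fun t : ℝ => t • f) (𝓝[>] 0) (𝓝 0) := by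
    simpa using (tendsto_nhdsWithin_of_tendsto_nhds (tendsto_id (x := 𝓝 (0 : ℝ)))).smul_const f
  exact hcl.mem_of_tendsto hlim (eventually_nhdsWithin_of_forall fun t ht => hQ.smul_mem hf ht)

def toProperCone (hQ : IsFunctionalCone Q) (hcl : IsClosed Q) (h0 : (0 : A → ℝ) ∈ Q) :
    ProperCone ℝ (A → ℝ) where
  carrier := Q
  add_mem' {f g} hf hg := by simpa using hQ.2 f hf g hg 1 1 one_pos one_pos
  zero_mem' := h0
  smul_mem' c f hf := by
    rcases c.2.eq_or_lt with hc | hc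
    · have hc0 : c = 0 := Subtype.ext hc.symm
      simpa [hc0] using h0
    · exact hQ.smul_mem hf hc
  isClosed' := hcl

end IsFunctionalCone

theorem ProperCone.exists_strongDual_pos_of_isCompact {E : Type*} [TopologicalSpace E]
    [AddCommGroup E] [IsTopologicalAddGroup E] [Module ℝ E] [ContinuousSMul ℝ E]
    [LocallyConvexSpace ℝ E] (C : ProperCone ℝ E) (hC : ∀ x ∈ C, x ≠ 0 → -x ∉ C)
    {K : Set E} (hK : IsCompact K) (hKC : K ⊆ C) (hK0 : (0 : E) ∉ K) :
    ∃ φ : StrongDual ℝ E, ∀ x ∈ K, 0 < φ x := by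
  have hsep (x : K) : ∃ φ : StrongDual ℝ E, (∀ y ∈ C, 0 ≤ φ y) ∧ 0 < φ x := by
    obtain ⟨φ, hφC, hφx⟩ := C.hyperplane_separation_point
      (hC x (hKC x.2) (ne_of_mem_of_not_mem x.2 hK0))
    exact ⟨φ, hφC, by simpa using hφx⟩
  choose φ hφC hφpos using hsep
  obtain ⟨t, hcover⟩ := hK.elim_finite_subcover (fun x => {y | 0 < φ x y})
    (fun x => isOpen_lt continuous_const (φ x).continuous)
    (fun x hx => mem_iUnion.2 ⟨⟨x, hx⟩, hφpos _⟩)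
  refine ⟨∑ x ∈ t, φ x, fun y hy => ?_⟩
  obtain ⟨x, hxt, hxy⟩ := mem_iUnion₂.1 (hcover hy)
  rw [FunLike.coe_sum, Finset.sum_apply]
  exact Finset.sum_pos' (fun z _ => hφC z y (hKC hy)) ⟨x, hxt, hxy⟩

variable {ι : Type*} [Fintype ι]

theorem exists_abs_apply_sub_sum_le (g : ι → A) (c : ι → ℝ) :
    ∃ y : A, ∀ f : A → ℝ, IsAddChar f →
      |f y - ∑ i, c i * f (g i)| ≤ (∑ i, |f (g i)|) / 2 := by
  refine ⟨∏ i, g i ^ round (c i), fun f hf => ?_⟩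
  rw [hf.map_prod, ← Finset.sum_sub_distrib, Finset.sum_div]
  refine (Finset.abs_sum_le_sum_abs _ _).trans (Finset.sum_le_sum fun i _ => ?_)
  rw [hf.map_zpow, ← sub_mul, abs_mul, abs_sub_comm]
  calc |c i - round (c i)| * |f (g i)| ≤ 1 / 2 * |f (g i)| := by gcongr; exact abs_sub_round _
    _ = |f (g i)| / 2 := by ring

variable {g : ι → A}

theorem exists_abs_apply_le_sum_abs (hg : Subgroup.closure (range g) = ⊤) (a : A) :
    ∃ C : ℝ, ∀ f : A → ℝ, IsAddChar f → |f a| ≤ C * ∑ i, |f (g i)| := by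
  induction (hg ▸ Subgroup.mem_top a : a ∈ Subgroup.closure (range g))
    using Subgroup.closure_induction with
  | mem x hx =>
    obtain ⟨i, rfl⟩ := hx
    exact ⟨1, fun f _ => by
      simpa using Finset.single_le_sum (fun j _ => abs_nonneg (f (g j))) (Finset.mem_univ i)⟩
  | one => exact ⟨0, fun f hf => by simp [hf.map_one]⟩
  | mul x y _ _ hx hy =>
    obtain ⟨C₁, h₁⟩ := hx
    obtain ⟨C₂, h₂⟩ := hy
    refine ⟨C₁ + C₂, fun f hf => ?_⟩
    rw [hf, add_mul]
    exact (abs_add_le _ _).trans (add_le_add (h₁ f hf) (h₂ f hf))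
  | inv x _ hx =>
    obtain ⟨C, h⟩ := hx
    exact ⟨C, fun f hf => by simpa [hf.map_inv] using h f hf⟩

theorem IsAddChar.eq_zero_of_forall_apply_eq_zero (hg : Subgroup.closure (range g) = ⊤)
    {f : A → ℝ} (hf : IsAddChar f) (h : ∀ i, f (g i) = 0) : f = 0 := by
  funext a
  obtain ⟨C, hC⟩ := exists_abs_apply_le_sum_abs hg a
  simpa [h] using hC f hf

theorem exists_eq_sum_mul_apply (hg : Subgroup.closure (range g) = ⊤)
    (φ : (A → ℝ) →ₗ[ℝ] ℝ) :
    ∃ c : ι → ℝ, ∀ f : A → ℝ, IsAddChar f → φ f = ∑ i, c i * f (g i) := by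
  classical
  let r : addCharSubmodule A →ₗ[ℝ] (ι → ℝ) :=
    (LinearMap.pi fun i => LinearMap.proj (g i)).comp (addCharSubmodule A).subtype
  have hr : LinearMap.ker r = ⊥ := LinearMap.ker_eq_bot'.2 fun f hf =>
    Subtype.ext (f.2.eq_zero_of_forall_apply_eq_zero hg fun i => congrFun hf i)
  obtain ⟨s, hs⟩ := r.exists_leftInverse_of_injective hr
  let ψ := φ ∘ₗ (addCharSubmodule A).subtype ∘ₗ s
  refine ⟨fun i => ψ fun j => if i = j then 1 else 0, fun f hf => ?_⟩
  have hφψ : φ f = ψ (r ⟨f, hf⟩) := by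
    simp only [ψ, LinearMap.comp_apply, ← LinearMap.comp_apply s r, hs, LinearMap.id_apply]
    rfl
  rw [hφψ, LinearMap.pi_apply_eq_sum_univ]
  exact Finset.sum_congr rfl fun i _ => by rw [smul_eq_mul, mul_comm]; rfl

variable {Q : Set (A → ℝ)}

theorem isCompact_setOf_sum_abs_eq_one (hg : Subgroup.closure (range g) = ⊤)
    (hQ : ∀ f ∈ Q, IsAddChar f) (hcl : IsClosed Q) :
    IsCompact {f ∈ Q | ∑ i, |f (g i)| = 1} := by
  choose C hC using exists_abs_apply_le_sum_abs hg
  have hbox : {f ∈ Q | ∑ i, |f (g i)| = 1} ⊆ univ.pi fun a => Icc (-C a) (C a) :=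
    fun f hf a _ => abs_le.1 (by simpa [hf.2] using hC a f (hQ f hf.1))
  refine (isCompact_univ_pi fun a => isCompact_Icc).of_isClosed_subset ?_ hbox
  exact hcl.inter (isClosed_eq (by fun_prop) continuous_const)

theorem exists_strongDual_mul_sum_abs_le (hg : Subgroup.closure (range g) = ⊤)
    (hQ : IsFunctionalCone Q) (hcl : IsClosed Q) (hsal : IsSalientCone Q) :
    ∃ φ : StrongDual ℝ (A → ℝ), ∃ δ > 0, ∀ f ∈ Q, δ * ∑ i, |f (g i)| ≤ φ f := by
  rcases Q.eq_empty_or_nonempty with rfl | hne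
  · exact ⟨0, 1, one_pos, by simp⟩
  set B := {f ∈ Q | ∑ i, |f (g i)| = 1}
  have hB : IsCompact B := isCompact_setOf_sum_abs_eq_one hg hQ.1 hcl
  obtain ⟨φ, hφ⟩ := ProperCone.exists_strongDual_pos_of_isCompact
    (hQ.toProperCone hcl (hQ.zero_mem hcl hne)) hsal hB (fun f hf => hf.1)
    (fun h0 => by simpa using h0.2)
  obtain ⟨δ, hδ, hδφ⟩ := hB.exists_forall_le' φ.continuous.continuousOn hφ
  refine ⟨φ, δ, hδ, fun f hf => ?_⟩
  rcases (Finset.sum_nonneg fun i _ => abs_nonneg (f (g i))).eq_or_lt with hN | hN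
  · have hf0 : f = 0 := (hQ.1 f hf).eq_zero_of_forall_apply_eq_zero hg fun i =>
      abs_eq_zero.1 ((Finset.sum_eq_zero_iff_of_nonneg fun j _ => abs_nonneg _).1 hN.symm i
        (Finset.mem_univ i))
    simp [hf0]
  · have hscaled := hδφ _ ⟨hQ.smul_mem hf (inv_pos.2 hN), by
      simp [abs_mul, ← Finset.mul_sum, abs_of_pos hN, hN.ne']⟩
    rwa [map_smul, smul_eq_mul, le_inv_mul_iff₀ hN, mul_comm] at hscaled

theorem exists_inv_two_mul_sum_abs_le_apply (hg : Subgroup.closure (range g) = ⊤)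
    (hQ : IsFunctionalCone Q) (hcl : IsClosed Q) (hsal : IsSalientCone Q) :
    ∃ y : A, ∀ f ∈ Q, 2⁻¹ * ∑ i, |f (g i)| ≤ f y := by
  obtain ⟨φ, δ, hδ, hφ⟩ := exists_strongDual_mul_sum_abs_le hg hQ hcl hsal
  obtain ⟨c, hc⟩ := exists_eq_sum_mul_apply hg (δ⁻¹ • (φ : (A → ℝ) →ₗ[ℝ] ℝ))
  obtain ⟨y, hy⟩ := exists_abs_apply_sub_sum_le g c
  refine ⟨y, fun f hf => ?_⟩
  have hφc : ∑ i, |f (g i)| ≤ ∑ i, c i * f (g i) := by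
    rw [← hc f (hQ.1 f hf), LinearMap.smul_apply, smul_eq_mul, le_inv_mul_iff₀ hδ]
    exact hφ f hf
  linarith [(abs_le.1 (hy f (hQ.1 f hf))).1]

theorem isCofinalElt_of_mul_sum_abs_le (hg : Subgroup.closure (range g) = ⊤)
    (hQ : ∀ f ∈ Q, IsAddChar f) {ε : ℝ} (hε : 0 < ε) {y : A}
    (hy : ∀ f ∈ Q, ε * ∑ i, |f (g i)| ≤ f y) : IsCofinalElt Q y := by
  refine ⟨fun f hf => ?_, fun a => ?_⟩
  · rw [inv_one, mul_one]
    exact (mul_nonneg hε.le (Finset.sum_nonneg fun i _ => abs_nonneg _)).trans (hy f hf)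
  obtain ⟨C, hC⟩ := exists_abs_apply_le_sum_abs hg a
  refine ⟨⌈C / ε⌉₊, fun f hf => ?_⟩
  have hN : 0 ≤ ∑ i, |f (g i)| := Finset.sum_nonneg fun i _ => abs_nonneg _
  have hCn : C ≤ ⌈C / ε⌉₊ * ε := (div_le_iff₀ hε).1 (Nat.le_ceil _)
  rw [hQ f hf, (hQ f hf).map_pow, (hQ f hf).map_inv, ← sub_eq_add_neg, sub_nonneg]
  calc f a ≤ C * ∑ i, |f (g i)| := le_of_abs_le (hC f (hQ f hf))
    _ ≤ ⌈C / ε⌉₊ * ε * ∑ i, |f (g i)| := by gcongr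
    _ ≤ ⌈C / ε⌉₊ * f y := by rw [mul_assoc]; gcongr; exact hy f hf

end

theorem exists_simultaneous_cofinal_element_general {A : Type*} [CommGroup A] [Group.FG A]
    (Q₀ Q₁ : Set (A → ℝ))
    (hQ₀ : IsFunctionalCone Q₀) (hclosed₀ : IsClosed Q₀) (hsalient₀ : IsSalientCone Q₀)
    (hsub : Q₁ ⊆ Q₀) :
    ∃ y : A,
      (ConePreorder Q₀ 1 y ∧
        ∀ x : A, ConePreorder Q₀ 1 x → ∃ n : ℕ, ConePreorder Q₀ x (y ^ n)) ∧
      (ConePreorder Q₁ 1 y ∧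
        ∀ x : A, ConePreorder Q₁ 1 x → ∃ n : ℕ, ConePreorder Q₁ x (y ^ n)) := by
  obtain ⟨S, hS, hSfin⟩ := Group.fg_iff.1 ‹Group.FG A›
  have : Fintype S := hSfin.fintype
  have hgen : Subgroup.closure (range ((↑) : S → A)) = ⊤ := by rwa [Subtype.range_coe]
  obtain ⟨y, hy⟩ := exists_inv_two_mul_sum_abs_le_apply hgen hQ₀ hclosed₀ hsalient₀
  have h₀ : IsCofinalElt Q₀ y :=
    isCofinalElt_of_mul_sum_abs_le hgen hQ₀.1 (by norm_num) hy
  have h₁ : IsCofinalElt Q₁ y := h₀.anti hsub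
  exact ⟨y, ⟨h₀.1, fun x _ => h₀.2 x⟩, h₁.1, fun x _ => h₁.2 x⟩

/-- for closed salient cones `Q₁ ⊆ Q₀` in `(A ⊗_ℤ ℝ)^*` there exists
`y ∈ A` which is simultaneously `Q₀`-cofinal and `Q₁`-cofinal, i.e. `0 ⪯_{Q_j} y` and
every `x` with `0 ⪯_{Q_j} x` satisfies `x ⪯_{Q_j} yⁿ` for some `n`, for `j = 0, 1`. -/
theorem exists_simultaneous_cofinal_element {A : Type*} [CommGroup A] [Group.FG A]
    (Q₀ Q₁ : Set (A → ℝ))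
    (hQ₀ : IsFunctionalCone Q₀) (hclosed₀ : IsClosed Q₀) (hsalient₀ : IsSalientCone Q₀)
    (hQ₁ : IsFunctionalCone Q₁) (hclosed₁ : IsClosed Q₁) (hsalient₁ : IsSalientCone Q₁)
    (hsub : Q₁ ⊆ Q₀) :
    ∃ y : A,
      (ConePreorder Q₀ 1 y ∧
        ∀ x : A, ConePreorder Q₀ 1 x → ∃ n : ℕ, ConePreorder Q₀ x (y ^ n)) ∧
      (ConePreorder Q₁ 1 y ∧
        ∀ x : A, ConePreorder Q₁ 1 x → ∃ n : ℕ, ConePreorder Q₁ x (y ^ n)) :=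
  exists_simultaneous_cofinal_element_general Q₀ Q₁ hQ₀ hclosed₀ hsalient₀ hsub
end

section
/- Let K be a Noetherian commutative ring, A a finitely generated abelian group, and Q ⊂ (A ⊗_ℤ ℝ)^* a salient rational polyhedral cone (the cone of nonnegative combinations of finitely many elements of (A ⊗_ℤ ℚ)^*). Then the monoid algebra F^Q_0 = K[S^Q_0], where S^Q_0 = {a ∈ A : 0 ⪯_Q a}, is a finitely generated K-algebra, and hence is Noetherian. -/
/-- A rational polyhedral cone in `(A ⊗_ℤ ℝ)^*`: the set of nonnegative real combinations
of finitely many rational functionals (i.e. elements of `(A ⊗_ℤ ℚ)^* ⊆ (A ⊗_ℤ ℝ)^*`). -/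
def IsRationalPolyhedralCone {A : Type*} [CommGroup A] (Q : Set (A → ℝ)) : Prop :=
  ∃ (k : ℕ) (w : Fin k → A → ℝ),
    (∀ i, IsAddChar (w i)) ∧ (∀ i a, ∃ q : ℚ, w i a = (q : ℝ)) ∧
      Q = {f : A → ℝ | ∃ r : Fin k → ℝ, (∀ i, 0 ≤ r i) ∧ f = ∑ i, r i • w i}


/-! Clearing denominators turns the cone condition into `φ a ∈ ℕᵏ` for a homomorphism
`φ : A →+ ℝᵏ` with values in `ℤᵏ`. The elements of `ℕᵏ` lying in the subgroup `φ(A)` form a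
subtractive submonoid of `ℕᵏ`, finitely generated by Dickson's lemma; lifts of its generators
together with generators of the finitely generated group `ker φ` generate `S`. A finitely
generated algebra over a Noetherian ring is Noetherian by Hilbert's basis theorem. -/

theorem AddSubmonoid.fg_of_fg_map_of_mker_le {A G : Type*} [AddGroup A] [AddMonoid G]
    (φ : A →+ G) {S : AddSubmonoid A} (hmap : (S.map φ).FG)
    (hker : (AddMonoidHom.mker φ).FG) (hker_le : AddMonoidHom.mker φ ≤ S) : S.FG := by
  obtain ⟨s, hs, hsfin⟩ := (AddSubmonoid.fg_iff _).1 hmap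
  have hsS : s ⊆ φ '' S := by rw [← AddSubmonoid.coe_map, ← hs]; exact AddSubmonoid.subset_closure
  obtain ⟨t, htS, htfin, ht⟩ := (Set.exists_subset_image_finite_and
    (p := fun u => AddSubmonoid.closure u = S.map φ)).1 ⟨s, hsS, hsfin, hs⟩
  have hclosure : (AddSubmonoid.closure t).FG := (AddSubmonoid.fg_iff _).2 ⟨t, rfl, htfin⟩
  suffices S = AddSubmonoid.closure t ⊔ AddMonoidHom.mker φ by rw [this]; exact hclosure.sup hker
  refine le_antisymm (fun x hx => ?_) (sup_le (AddSubmonoid.closure_le.2 htS) hker_le)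
  obtain ⟨y, hy, hyx⟩ : φ x ∈ (AddSubmonoid.closure t).map φ := by
    rw [AddMonoidHom.map_mclosure, ht]; exact AddSubmonoid.mem_map_of_mem φ hx
  have hker_mem : -y + x ∈ AddMonoidHom.mker φ := by
    rw [AddMonoidHom.mem_mker, map_add, ← hyx, ← map_add, neg_add_cancel, map_zero]
  simpa using AddSubmonoid.add_mem_sup hy hker_mem

theorem AddSubmonoid.fg_comap_mrange {N G A : Type*} [AddCommMonoid N] [PartialOrder N]
    [WellQuasiOrderedLE N] [IsOrderedCancelAddMonoid N] [CanonicallyOrderedAdd N]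
    [AddGroup G] [AddGroup A] (c : N →+ G) (φ : A →+ G) (hker : (AddMonoidHom.mker φ).FG) :
    ((AddMonoidHom.mrange c).comap φ).FG := by
  have hpre : (φ.range.toAddSubmonoid.comap c).FG :=
    AddSubmonoid.fg_of_subtractive fun x hx y hxy => by
      simpa [map_add, φ.range.add_mem_cancel_left hx] using hxy
  refine AddSubmonoid.fg_of_fg_map_of_mker_le φ ?_ hker fun a ha => ⟨0, by simp_all⟩
  rw [AddSubmonoid.map_comap_eq, inf_comm]
  exact AddSubmonoid.map_comap_eq c _ ▸ hpre.map c

theorem AddSubgroup.fg_of_addGroup_fg {A : Type*} [AddCommGroup A] [AddGroup.FG A]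
    (H : AddSubgroup A) : H.FG := by
  have : Module.Finite ℤ A := Module.Finite.iff_addGroup_fg.2 ‹_›
  simpa using (Submodule.fg_iff_addSubgroup_fg _).1 (IsNoetherian.noetherian H.toIntSubmodule)

theorem AddMonoidHom.exists_nat_mul_eq_intCast {A : Type*} [AddGroup A] [AddGroup.FG A]
    (ψ : A →+ ℝ) (hψ : ∀ a, ∃ q : ℚ, ψ a = q) : ∃ D : ℕ, 0 < D ∧ ∀ a, ∃ m : ℤ, D * ψ a = m := by
  classical
  obtain ⟨T, hT⟩ := AddGroup.FG.out (H := A)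
  choose q hq using hψ
  set D := ∏ t ∈ T, (q t).den
  suffices hle : ⊤ ≤ (Int.castAddHom ℝ).range.comap (D • ψ) by
    refine ⟨D, Finset.prod_pos fun t _ => (q t).den_pos, fun a => ?_⟩
    obtain ⟨m, hm⟩ := hle (AddSubgroup.mem_top a)
    exact ⟨m, by simpa using hm.symm⟩
  rw [← hT, AddSubgroup.closure_le]
  intro t ht
  obtain ⟨e, he⟩ : (q t).den ∣ D := Finset.dvd_prod_of_mem (fun t => (q t).den) ht
  refine ⟨e * (q t).num, ?_⟩
  simp only [Int.coe_castAddHom, AddMonoidHom.coe_smul, Pi.smul_apply, nsmul_eq_mul, hq, he]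
  have hnum : ((q t).num : ℝ) = q t * (q t).den := by exact_mod_cast (q t).mul_den_eq_num.symm
  push_cast
  rw [hnum]
  ring

def IsAddChar.toAddMonoidHom_s5 {A : Type*} [CommGroup A] {f : A → ℝ} (hf : IsAddChar f) :
    Additive A →+ ℝ :=
  AddMonoidHom.mk' (fun a => f a.toMul) fun x y => hf x.toMul y.toMul

theorem conePreorder_one_iff {A ι : Type*} [CommGroup A] [Fintype ι] (w : ι → A → ℝ) (a : A) :
    ConePreorder {f | ∃ r : ι → ℝ, (∀ i, 0 ≤ r i) ∧ f = ∑ i, r i • w i} 1 a ↔ ∀ i, 0 ≤ w i a := by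
  classical
  simp only [ConePreorder, inv_one, mul_one]
  constructor
  · intro h i
    exact h (w i) ⟨Pi.single i 1, (Pi.single_nonneg.2 zero_le_one : (0 : ι → ℝ) ≤ _),
      by simp [Pi.single_apply]⟩
  · rintro h f ⟨r, hr, rfl⟩
    simp only [Finset.sum_apply, Pi.smul_apply, smul_eq_mul]
    exact Finset.sum_nonneg fun i _ => mul_nonneg (hr i) (h i)

theorem nonneg_iff_exists_mul_eq_natCast {x : ℝ} {D : ℕ} (hD : 0 < D) {m : ℤ} (hm : D * x = m) :
    0 ≤ x ↔ ∃ n : ℕ, D * x = n := by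
  rw [← mul_nonneg_iff_of_pos_left (by positivity : (0 : ℝ) < D), hm]
  constructor
  · intro h
    lift m to ℕ using (by exact_mod_cast h)
    exact ⟨m, rfl⟩
  · rintro ⟨n, hn⟩
    rw [hn]
    positivity

theorem dualMonoidAlgebra_finiteType_and_noetherian_general
    {A K : Type*} [CommGroup A] [Group.FG A] [CommRing K] [IsNoetherianRing K]
    (Q : Set (A → ℝ)) (hpoly : IsRationalPolyhedralCone Q)
    (S : Submonoid A) (hS : ∀ a : A, a ∈ S ↔ ConePreorder Q 1 a) :
    Algebra.FiniteType K (MonoidAlgebra K ↥S) ∧ IsNoetherianRing (MonoidAlgebra K ↥S) := by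
  obtain ⟨k, w, hw, hrat, rfl⟩ := hpoly
  choose D hD hDw using fun i =>
    (hw i).toAddMonoidHom_s5.exists_nat_mul_eq_intCast fun a => hrat i a.toMul
  let φ : Additive A →+ (Fin k → ℝ) := AddMonoidHom.pi fun i => D i • (hw i).toAddMonoidHom_s5
  have hSφ : S.toAddSubmonoid =
      (AddMonoidHom.mrange ((Nat.castAddMonoidHom ℝ).compLeft (Fin k))).comap φ := by
    ext a
    calc a ∈ S.toAddSubmonoid ↔ ∀ i, 0 ≤ w i a.toMul := (hS _).trans (conePreorder_one_iff w _)
      _ ↔ ∀ i, ∃ n : ℕ, D i * w i a.toMul = n := forall_congr' fun i => by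
        obtain ⟨m, hm⟩ := hDw i a
        exact nonneg_iff_exists_mul_eq_natCast (hD i) hm
      _ ↔ _ := by
        simp only [AddSubmonoid.mem_comap, AddMonoidHom.mem_mrange, funext_iff, φ]
        refine Classical.skolem.trans (exists_congr fun n => forall_congr' fun i => ?_)
        simp [IsAddChar.toAddMonoidHom_s5, eq_comm]
  have hSfg : S.FG := by
    rw [Submonoid.fg_iff_add_fg, hSφ]
    exact AddSubmonoid.fg_comap_mrange _ φ
      ((AddSubgroup.fg_iff_addSubmonoid_fg _).1 (AddSubgroup.fg_of_addGroup_fg φ.ker))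
  have : Monoid.FG S := (Monoid.fg_iff_submonoid_fg S).2 hSfg
  exact ⟨inferInstance, Algebra.FiniteType.isNoetherianRing K _⟩

/-- Gordan's lemma: for a salient rational polyhedral cone
`Q ⊆ (A ⊗_ℤ ℝ)^*` (`A` finitely generated) and a Noetherian commutative ring `K`,
the monoid algebra `F^Q_0 = K[S^Q_0]` of the dual monoid `S^Q_0 = {a : 0 ⪯_Q a}` is
a finitely generated `K`-algebra, and hence Noetherian. -/
theorem dualMonoidAlgebra_finiteType_and_noetherian
    {A K : Type*} [CommGroup A] [Group.FG A] [CommRing K] [IsNoetherianRing K]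
    (Q : Set (A → ℝ)) (hpoly : IsRationalPolyhedralCone Q) (hsalient : IsSalientCone Q)
    (S : Submonoid A) (hS : ∀ a : A, a ∈ S ↔ ConePreorder Q 1 a) :
    Algebra.FiniteType K (MonoidAlgebra K ↥S) ∧ IsNoetherianRing (MonoidAlgebra K ↥S) :=
  dualMonoidAlgebra_finiteType_and_noetherian_general Q hpoly S hS
end
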